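/- arXiv:1811.12266 — 8 statements merged into one kernel-verified Lean document; each statement's English description precedes it below -/
import Mathlib

section
/- Let g be a finite-dimensional real Lie algebra with dim g ≥ 6, and let ω be a non-degenerate 2-form on g such that dω = θ ∧ ω for some 1-form θ. Then θ is closed, i.e., dθ = 0. -/
/-- If `ω` is a non-degenerate 2-form on a Lie algebra of dimension at least 6
with `dω = θ ∧ ω`, then `θ` is closed. -/
theorem lee_form_closed {L : Type*} [LieRing L] [LieAlgebra ℝ L]
    [FiniteDimensional ℝ L] (hdim : 6 ≤ Module.finrank ℝ L)
    (ω : L →ₗ[ℝ] L →ₗ[ℝ] ℝ) (θ : L →ₗ[ℝ] ℝ)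
    (hskew : ∀ X Y : L, ω X Y = - ω Y X)
    (hnd : ∀ X : L, X ≠ 0 → ∃ Y : L, ω X Y ≠ 0)
    (hdω : ∀ X Y Z : L, -ω ⁅X, Y⁆ Z + ω ⁅X, Z⁆ Y - ω ⁅Y, Z⁆ X
        = θ X * ω Y Z - θ Y * ω X Z + θ Z * ω X Y) :
    ∀ X Y : L, θ ⁅X, Y⁆ = 0 := by
  -- basic facts
  have hzero : ∀ u : L, ω u u = 0 := fun u => by have := hskew u u; linarith
  have hflip : ∀ p q r d : L, ω ⁅p, ⁅q, r⁆⁆ d + ω ⁅p, ⁅r, q⁆⁆ d = 0 := by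
    intro p q r d
    rw [← lie_skew r q, lie_neg, map_neg, LinearMap.neg_apply]
    ring
  have hjac : ∀ a b c d : L,
      ω ⁅c, ⁅a, b⁆⁆ d + ω ⁅a, ⁅b, c⁆⁆ d - ω ⁅b, ⁅a, c⁆⁆ d = 0 := by
    intro a b c d
    have h : ⁅c, ⁅a, b⁆⁆ = -⁅a, ⁅b, c⁆⁆ + ⁅b, ⁅a, c⁆⁆ := by
      rw [← lie_skew c ⁅a, b⁆, lie_lie]
      abel
    rw [h, map_add, map_neg, LinearMap.add_apply, LinearMap.neg_apply]
    ring
  -- d² = 0 (Jacobi) identity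
  have hd2 : ∀ X Y Z W : L,
      -(-ω ⁅⁅X,Y⁆,Z⁆ W + ω ⁅⁅X,Y⁆,W⁆ Z - ω ⁅Z,W⁆ ⁅X,Y⁆)
      + (-ω ⁅⁅X,Z⁆,Y⁆ W + ω ⁅⁅X,Z⁆,W⁆ Y - ω ⁅Y,W⁆ ⁅X,Z⁆)
      - (-ω ⁅⁅X,W⁆,Y⁆ Z + ω ⁅⁅X,W⁆,Z⁆ Y - ω ⁅Y,Z⁆ ⁅X,W⁆)
      - (-ω ⁅⁅Y,Z⁆,X⁆ W + ω ⁅⁅Y,Z⁆,W⁆ X - ω ⁅X,W⁆ ⁅Y,Z⁆)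
      + (-ω ⁅⁅Y,W⁆,X⁆ Z + ω ⁅⁅Y,W⁆,Z⁆ X - ω ⁅X,Z⁆ ⁅Y,W⁆)
      - (-ω ⁅⁅Z,W⁆,X⁆ Y + ω ⁅⁅Z,W⁆,Y⁆ X - ω ⁅X,Y⁆ ⁅Z,W⁆) = 0 := by
    intro X Y Z W
    simp only [lie_lie, map_sub, LinearMap.sub_apply]
    linarith [hflip X Y Z W, hflip Y X Z W, hflip Z X Y W, hjac X Y Z W,
      hflip X Y W Z, hflip Y X W Z, hflip W X Y Z, hjac X Y W Z,
      hflip X Z W Y, hflip Z X W Y, hflip W X Z Y, hjac X Z W Y,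
      hflip Y Z W X, hflip Z Y W X, hflip W Y Z X, hjac Y Z W X,
      hskew ⁅Z,W⁆ ⁅X,Y⁆, hskew ⁅Y,W⁆ ⁅X,Z⁆, hskew ⁅Y,Z⁆ ⁅X,W⁆]
  -- the 4-form identity dθ ∧ ω = 0
  have key : ∀ X Y Z W : L,
      θ ⁅X,Y⁆ * ω Z W - θ ⁅X,Z⁆ * ω Y W + θ ⁅X,W⁆ * ω Y Z
      + θ ⁅Y,Z⁆ * ω X W - θ ⁅Y,W⁆ * ω X Z + θ ⁅Z,W⁆ * ω X Y = 0 := by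
    intro X Y Z W
    linear_combination (-1 : ℝ) * hdω ⁅X,Y⁆ Z W + hdω ⁅X,Z⁆ Y W - hdω ⁅X,W⁆ Y Z
      - hdω ⁅Y,Z⁆ X W + hdω ⁅Y,W⁆ X Z - hdω ⁅Z,W⁆ X Y
      - θ X * hdω Y Z W + θ Y * hdω X Z W - θ Z * hdω X Y W + θ W * hdω X Y Z
      - hd2 X Y Z W
  -- injectivity of ω
  have hinj : ∀ u : L, (∀ z : L, ω u z = 0) → u = 0 := by
    intro u hu
    by_contra h
    obtain ⟨z, hz⟩ := hnd u h
    exact hz (hu z)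
  -- rank bound for common annihilators
  have hrank : ∀ (k : ℕ) (v : Fin k → L),
      Module.finrank ℝ L ≤ Module.finrank ℝ ↥(⨅ i, LinearMap.ker (ω (v i))) + k := by
    intro k v
    have h1 := LinearMap.finrank_range_add_finrank_ker (LinearMap.pi fun i => ω (v i))
    have h2 : Module.finrank ℝ ↥(LinearMap.range (LinearMap.pi fun i => ω (v i)))
        ≤ Module.finrank ℝ (Fin k → ℝ) := Submodule.finrank_le _
    have h3 : Module.finrank ℝ (Fin k → ℝ) = k := by simp
    rw [LinearMap.ker_pi] at h1
    omega
  -- representation of vectors ω-orthogonal to a common annihilator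
  have hrep : ∀ (k : ℕ) (v : Fin k → L) (u : L),
      (∀ z ∈ (⨅ i, LinearMap.ker (ω (v i))), ω u z = 0) →
      ∃ c : Fin k → ℝ, u = ∑ i, c i • v i := by
    intro k v u hu
    have hle : (⨅ i, LinearMap.ker (ω (v i))) ≤ LinearMap.ker (ω u) :=
      fun z hz => LinearMap.mem_ker.2 (hu z hz)
    have hsp := mem_span_of_iInf_ker_le_ker hle
    obtain ⟨c, hc⟩ := (Submodule.mem_span_range_iff_exists_fun ℝ).1 hsp
    refine ⟨c, ?_⟩
    have hω : ω (∑ i, c i • v i) = ω u := by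
      rw [map_sum]
      simp_rw [map_smul]
      exact hc
    have h0 : ∀ z : L, ω (u - ∑ i, c i • v i) z = 0 := by
      intro z
      rw [map_sub, LinearMap.sub_apply, hω, sub_self]
    exact (sub_eq_zero.mp (hinj _ h0)).symm ▸ rfl
  intro X Y
  -- common annihilator of X, Y
  set K : Submodule ℝ L := ⨅ i, LinearMap.ker (ω (![X, Y] i)) with hKdef
  have hexZW : ∃ Z ∈ K, ∃ W ∈ K, ω Z W ≠ 0 := by
    by_contra h
    push_neg at h
    have hsub : K ≤ Submodule.span ℝ ({X, Y} : Set L) := by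
      intro u hu
      obtain ⟨c, hc⟩ := hrep 2 ![X, Y] u (fun z hz => h u hu z hz)
      rw [hc]
      exact Submodule.sum_mem _ fun i _ =>
        Submodule.smul_mem _ _ (Submodule.subset_span (by fin_cases i <;> simp))
    have h4 : Module.finrank ℝ ↥(Submodule.span ℝ ({X, Y} : Set L)) ≤ 2 := by
      apply Module.finrank_le_of_rank_le
      refine (rank_span_le _).trans ?_
      have h := Cardinal.mk_insert_le (α := L) (s := ({Y} : Set L)) (a := X)
      rw [Cardinal.mk_singleton] at h
      exact h.trans (by norm_num)
    have h5 := Submodule.finrank_mono hsub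
    have h6 := hrank 2 ![X, Y]
    rw [← hKdef] at h6
    omega
  obtain ⟨Z, hZ, W, hW, hZW⟩ := hexZW
  have hXZ : ω X Z = 0 := by have := (Submodule.mem_iInf _).1 hZ 0; simpa using this
  have hYZ : ω Y Z = 0 := by have := (Submodule.mem_iInf _).1 hZ 1; simpa using this
  have hXW : ω X W = 0 := by have := (Submodule.mem_iInf _).1 hW 0; simpa using this
  have hYW : ω Y W = 0 := by have := (Submodule.mem_iInf _).1 hW 1; simpa using this
  by_cases h1 : ω X Y = 0
  · -- degenerate case: directly from key
    have hk := key X Y Z W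
    rw [h1, hXZ, hXW, hYZ, hYW] at hk
    have h2 : θ ⁅X, Y⁆ * ω Z W = 0 := by linear_combination hk
    exact (mul_eq_zero.1 h2).resolve_right hZW
  · -- nondegenerate case: find a third orthogonal symplectic plane
    set K2 : Submodule ℝ L := ⨅ i, LinearMap.ker (ω (![X, Y, Z, W] i)) with hK2def
    have hexUV : ∃ U ∈ K2, ∃ V ∈ K2, ω U V ≠ 0 := by
      by_contra h
      push_neg at h
      have hbot : K2 = ⊥ := by
        rw [Submodule.eq_bot_iff]
        intro u hu
        obtain ⟨c, hc⟩ := hrep 4 ![X, Y, Z, W] u (fun z hz => h u hu z hz)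
        rw [Fin.sum_univ_four] at hc
        simp only [Matrix.cons_val_zero, Matrix.cons_val_one, Matrix.head_cons,
          Matrix.cons_val_two, Matrix.tail_cons, Matrix.cons_val_three] at hc
        have hXu : ω X u = 0 := by have := (Submodule.mem_iInf _).1 hu 0; simpa using this
        have hYu : ω Y u = 0 := by have := (Submodule.mem_iInf _).1 hu 1; simpa using this
        have hZu : ω Z u = 0 := by have := (Submodule.mem_iInf _).1 hu 2; simpa using this
        have hWu : ω W u = 0 := by have := (Submodule.mem_iInf _).1 hu 3; simpa using this
        rw [hc] at hXu hYu hZu hWu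
        simp only [map_add, map_smul, smul_eq_mul] at hXu hYu hZu hWu
        rw [hzero X, hXZ, hXW] at hXu
        rw [hzero Y, hYZ, hYW, hskew Y X] at hYu
        rw [hzero Z, hskew Z X, hXZ, hskew Z Y, hYZ] at hZu
        rw [hzero W, hskew W X, hXW, hskew W Y, hYW, hskew W Z] at hWu
        have hc1 : c 1 = 0 := by
          have hh : c 1 * ω X Y = 0 := by linear_combination hXu
          exact (mul_eq_zero.1 hh).resolve_right h1
        have hc0 : c 0 = 0 := by
          have hh : c 0 * ω X Y = 0 := by linear_combination (-1 : ℝ) * hYu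
          exact (mul_eq_zero.1 hh).resolve_right h1
        have hc3 : c 3 = 0 := by
          have hh : c 3 * ω Z W = 0 := by linear_combination hZu
          exact (mul_eq_zero.1 hh).resolve_right hZW
        have hc2 : c 2 = 0 := by
          have hh : c 2 * ω Z W = 0 := by linear_combination (-1 : ℝ) * hWu
          exact (mul_eq_zero.1 hh).resolve_right hZW
        rw [hc, hc0, hc1, hc2, hc3]
        simp
      have h6 := hrank 4 ![X, Y, Z, W]
      rw [← hK2def, hbot, finrank_bot] at h6
      omega
    obtain ⟨U, hU, V, hV, hUV⟩ := hexUV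
    have hXU : ω X U = 0 := by have := (Submodule.mem_iInf _).1 hU 0; simpa using this
    have hYU : ω Y U = 0 := by have := (Submodule.mem_iInf _).1 hU 1; simpa using this
    have hZU : ω Z U = 0 := by have := (Submodule.mem_iInf _).1 hU 2; simpa using this
    have hWU : ω W U = 0 := by have := (Submodule.mem_iInf _).1 hU 3; simpa using this
    have hXV : ω X V = 0 := by have := (Submodule.mem_iInf _).1 hV 0; simpa using this
    have hYV : ω Y V = 0 := by have := (Submodule.mem_iInf _).1 hV 1; simpa using this
    have hZV : ω Z V = 0 := by have := (Submodule.mem_iInf _).1 hV 2; simpa using this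
    have hWV : ω W V = 0 := by have := (Submodule.mem_iInf _).1 hV 3; simpa using this
    have e1 : θ ⁅X,Y⁆ * ω Z W + θ ⁅Z,W⁆ * ω X Y = 0 := by
      have hk := key X Y Z W
      rw [hXZ, hXW, hYZ, hYW] at hk
      linear_combination hk
    have e2 : θ ⁅X,Y⁆ * ω U V + θ ⁅U,V⁆ * ω X Y = 0 := by
      have hk := key X Y U V
      rw [hXU, hXV, hYU, hYV] at hk
      linear_combination hk
    have e3 : θ ⁅Z,W⁆ * ω U V + θ ⁅U,V⁆ * ω Z W = 0 := by
      have hk := key Z W U V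
      rw [hZU, hZV, hWU, hWV] at hk
      linear_combination hk
    have h4 : θ ⁅U,V⁆ * (ω X Y * ω Z W) * 2 = 0 := by
      linear_combination (ω Z W) * e2 + (ω X Y) * e3 - (ω U V) * e1
    have h5 : θ ⁅U,V⁆ = 0 := by
      have h6 : θ ⁅U,V⁆ * (ω X Y * ω Z W) = 0 := by linarith
      exact (mul_eq_zero.1 h6).resolve_right (mul_ne_zero h1 hZW)
    have h7 : θ ⁅X,Y⁆ * ω U V = 0 := by
      rw [h5] at e2
      linear_combination e2
    exact (mul_eq_zero.1 h7).resolve_right hUV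
end

section
/- Let h be a Lie algebra with LCS structure (ω, θ), (V, ω₀) a symplectic vector space, and π: h → End(V) a representation. On g = h ⋉_π V define ω̃ by ω̃|_h = ω, ω̃|_V = ω₀ and ω̃(X,Y) = 0 for X ∈ h, Y ∈ V, and θ̃ by θ̃|_h = θ, θ̃|_V = 0. Then dω̃ = θ̃ ∧ ω̃ on g if and only if π(X) = -(1/2)θ(X) Id + ρ(X) with ρ(X) ∈ sp(V, ω₀) for every X ∈ h. -/
/-- On the semidirect product `g = h ⋉_π V` of a LCS Lie algebra `(h, ω, θ)` and a
symplectic vector space `(V, ω₀)`, the 2-form `ω̃` satisfies `dω̃ = θ̃ ∧ ω̃`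
iff `π(X) = -(1/2)θ(X) Id + ρ(X)` with `ρ(X) ∈ sp(V, ω₀)` for all `X`. -/
theorem semidirect_lcs_iff {H V : Type*} [LieRing H] [LieAlgebra ℝ H]
    [AddCommGroup V] [Module ℝ V] [FiniteDimensional ℝ V]
    (ω : H →ₗ[ℝ] H →ₗ[ℝ] ℝ) (θ : H →ₗ[ℝ] ℝ)
    (hskew : ∀ X Y : H, ω X Y = - ω Y X)
    (hnd : ∀ X : H, X ≠ 0 → ∃ Y : H, ω X Y ≠ 0)
    (hclosed : ∀ X Y : H, θ ⁅X, Y⁆ = 0)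
    (hdω : ∀ X Y Z : H, -ω ⁅X, Y⁆ Z + ω ⁅X, Z⁆ Y - ω ⁅Y, Z⁆ X
        = θ X * ω Y Z - θ Y * ω X Z + θ Z * ω X Y)
    (ω₀ : V →ₗ[ℝ] V →ₗ[ℝ] ℝ)
    (hskew₀ : ∀ u v : V, ω₀ u v = - ω₀ v u)
    (hnd₀ : ∀ u : V, u ≠ 0 → ∃ v : V, ω₀ u v ≠ 0)
    (π : H →ₗ[ℝ] Module.End ℝ V)
    (hπ : ∀ X Y : H, π ⁅X, Y⁆ = π X * π Y - π Y * π X) :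
    -- bracket, 2-form and 1-form of the semidirect product g = h ⋉_π V
    (let b : H × V → H × V → H × V :=
       fun P Q => (⁅P.1, Q.1⁆, π P.1 Q.2 - π Q.1 P.2)
     let Ω : H × V → H × V → ℝ := fun P Q => ω P.1 Q.1 + ω₀ P.2 Q.2
     let Θ : H × V → ℝ := fun P => θ P.1
     (∀ P Q R : H × V, -Ω (b P Q) R + Ω (b P R) Q - Ω (b Q R) P
        = Θ P * Ω Q R - Θ Q * Ω P R + Θ R * Ω P Q)
     ↔ (∀ X : H, ∃ ρ : Module.End ℝ V,
          π X = (-(θ X / 2)) • (1 : Module.End ℝ V) + ρ ∧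
          ∀ Y Z : V, ω₀ (ρ Y) Z + ω₀ Y (ρ Z) = 0)) := by
  intro b Ω Θ
  constructor
  · intro hh X
    refine ⟨π X + (θ X / 2) • 1, ?_, ?_⟩
    · module
    · intro Y Z
      have hk := hh (X, 0) (0, Y) (0, Z)
      simp only [b, Ω, Θ, lie_zero, zero_lie, map_zero, LinearMap.zero_apply, sub_zero,
        zero_sub, map_neg, zero_add, add_zero, mul_zero, zero_mul] at hk
      simp only [LinearMap.add_apply, LinearMap.smul_apply, Module.End.one_apply,
        map_add, map_smul, smul_eq_mul]
      have hs := hskew₀ Y ((π X) Z)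
      linarith [hk, hskew₀ Y ((π X) Z), hskew₀ Y Z]
  · intro hc P Q R
    have key2 : ∀ (X : H) (v w : V),
        -ω₀ ((π X) v) w + ω₀ ((π X) w) v = θ X * ω₀ v w := by
      intro X v w
      obtain ⟨ρ, h1, h2⟩ := hc X
      have hv : (π X) v = -(θ X / 2) • v + ρ v := by rw [h1]; simp
      have hw : (π X) w = -(θ X / 2) • w + ρ w := by rw [h1]; simp
      rw [hv, hw]
      simp only [map_add, map_smul, LinearMap.add_apply, LinearMap.smul_apply, smul_eq_mul]
      have := h2 v w
      have hs := hskew₀ v (ρ w)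
      linear_combination -h2 v w + hskew₀ v (ρ w) - (θ X / 2) * hskew₀ w v
    simp only [b, Ω, Θ, map_sub, LinearMap.sub_apply]
    linear_combination hdω P.1 Q.1 R.1 + key2 P.1 Q.2 R.2 - key2 Q.1 P.2 R.2
      + key2 R.1 P.2 Q.2
end

section
/- With g = h ⋉_π V constructed from a LCS Lie algebra (h, ω, θ) with θ ≠ 0, a symplectic vector space (V, ω₀), and a LCS representation π (i.e., π(X) = -(1/2)θ(X)Id + ρ(X) with ρ(X) ∈ sp(V,ω₀)), the LCS structure (ω̃, θ̃) on g is of the second kind: every infinitesimal automorphism X ∈ g_ω̃ satisfies θ̃(X) = 0. -/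
/-- The LCS structure `(ω̃, θ̃)` on `g = h ⋉_π V` obtained from a LCS Lie algebra
`(h, ω, θ)` with `θ ≠ 0`, a symplectic vector space `(V, ω₀)` and a LCS
representation `π` is of the second kind: `θ̃` vanishes on every infinitesimal
automorphism of `ω̃`. -/
theorem semidirect_second_kind {H V : Type*} [LieRing H] [LieAlgebra ℝ H]
    [AddCommGroup V] [Module ℝ V] [Nontrivial V]
    (ω : H →ₗ[ℝ] H →ₗ[ℝ] ℝ) (θ : H →ₗ[ℝ] ℝ) (hθ : θ ≠ 0)
    (hskew : ∀ X Y : H, ω X Y = - ω Y X)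
    (hnd : ∀ X : H, X ≠ 0 → ∃ Y : H, ω X Y ≠ 0)
    (hclosed : ∀ X Y : H, θ ⁅X, Y⁆ = 0)
    (hdω : ∀ X Y Z : H, -ω ⁅X, Y⁆ Z + ω ⁅X, Z⁆ Y - ω ⁅Y, Z⁆ X
        = θ X * ω Y Z - θ Y * ω X Z + θ Z * ω X Y)
    (ω₀ : V →ₗ[ℝ] V →ₗ[ℝ] ℝ)
    (hskew₀ : ∀ u v : V, ω₀ u v = - ω₀ v u)
    (hnd₀ : ∀ u : V, u ≠ 0 → ∃ v : V, ω₀ u v ≠ 0)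
    (π : H →ₗ[ℝ] Module.End ℝ V)
    (hπ : ∀ X Y : H, π ⁅X, Y⁆ = π X * π Y - π Y * π X)
    (ρ : H → Module.End ℝ V)
    (hdecomp : ∀ X : H, π X = (-(θ X / 2)) • (1 : Module.End ℝ V) + ρ X)
    (hsp : ∀ (X : H) (Y Z : V), ω₀ (ρ X Y) Z + ω₀ Y (ρ X Z) = 0) :
    (let b : H × V → H × V → H × V :=
       fun P Q => (⁅P.1, Q.1⁆, π P.1 Q.2 - π Q.1 P.2)
     let Ω : H × V → H × V → ℝ := fun P Q => ω P.1 Q.1 + ω₀ P.2 Q.2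
     let Θ : H × V → ℝ := fun P => θ P.1
     ∀ P : H × V, (∀ Q R : H × V, Ω (b P Q) R + Ω Q (b P R) = 0) → Θ P = 0) := by
  intro b Ω Θ P hP
  obtain ⟨u, hu⟩ := exists_ne (0 : V)
  obtain ⟨w, hw⟩ := hnd₀ u hu
  have key := hP (0, u) (0, w)
  simp only [b, Ω, Θ] at key ⊢
  simp only [lie_zero, map_zero, LinearMap.zero_apply, zero_sub, sub_zero,
    LinearMap.map_neg, zero_add, map_neg, LinearMap.neg_apply] at key
  -- key : ω₀ (π P.1 u) w + ω₀ u (π P.1 w) = 0 (possibly with signs)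
  rw [hdecomp P.1] at key
  simp only [LinearMap.add_apply, LinearMap.smul_apply, Module.End.one_apply,
    map_add, map_smul, smul_eq_mul] at key
  have hsp' := hsp P.1 u w
  have hω : θ P.1 * ω₀ u w = 0 := by nlinarith [key, hsp']
  rcases mul_eq_zero.mp hω with h | h
  · exact h
  · exact absurd h hw
end

section
/- With g = h ⋉_π V constructed from a LCS Lie algebra (h, ω, θ), a symplectic vector space (V, ω₀) with dim V ≥ 2, and a LCS representation π, the LCS structure (ω̃, θ̃) on g is non-exact: there is no 1-form η ∈ g* with ω̃ = dη - θ̃ ∧ η. (Indeed, the restriction to V of any d_θ̃-exact 2-form vanishes, while ω₀ is non-degenerate.) -/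
/-!
For `u, v ∈ V` the twisted coboundary `d_θ̃ η (u, v) = -η [u, v] - (θ̃ u η v - θ̃ v η u)` vanishes,
because `V` is an abelian ideal on which `θ̃` is zero. So an exact `ω̃` would restrict to zero on
`V`, while it restricts to the nondegenerate `ω₀` on the nonzero space `V`.
-/

section SemidirectProduct

variable {R H V : Type*} [CommRing R] [LieRing H] [Module R H] [AddCommGroup V] [Module R V]

def semidirectBracket (π : H →ₗ[R] Module.End R V) (P Q : H × V) : H × V :=
  (⁅P.1, Q.1⁆, π P.1 Q.2 - π Q.1 P.2)

def twistedDiff (π : H →ₗ[R] Module.End R V) (θ : H →ₗ[R] R) (η : H × V →ₗ[R] R)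
    (P Q : H × V) : R :=
  -η (semidirectBracket π P Q) - (θ P.1 * η Q - θ Q.1 * η P)

theorem twistedDiff_eq_zero_of_fst_eq_zero (π : H →ₗ[R] Module.End R V) (θ : H →ₗ[R] R)
    (η : H × V →ₗ[R] R) {P Q : H × V} (hP : P.1 = 0) (hQ : Q.1 = 0) :
    twistedDiff π θ η P Q = 0 := by
  obtain ⟨_, u⟩ := P
  obtain ⟨_, v⟩ := Q
  subst hP hQ
  simp [twistedDiff, semidirectBracket, Prod.mk_zero_zero]

end SemidirectProduct

theorem semidirect_non_exact_general {H V : Type*} [LieRing H] [LieAlgebra ℝ H]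
    [AddCommGroup V] [Module ℝ V] (hdimV : 2 ≤ Module.finrank ℝ V)
    (ω : H →ₗ[ℝ] H →ₗ[ℝ] ℝ) (θ : H →ₗ[ℝ] ℝ)
    (ω₀ : V →ₗ[ℝ] V →ₗ[ℝ] ℝ)
    (hnd₀ : ∀ u : V, u ≠ 0 → ∃ v : V, ω₀ u v ≠ 0)
    (π : H →ₗ[ℝ] Module.End ℝ V) :
    (let b : H × V → H × V → H × V :=
       fun P Q => (⁅P.1, Q.1⁆, π P.1 Q.2 - π Q.1 P.2)
     let Ω : H × V → H × V → ℝ := fun P Q => ω P.1 Q.1 + ω₀ P.2 Q.2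
     let Θ : H × V → ℝ := fun P => θ P.1
     ¬ ∃ η : H × V →ₗ[ℝ] ℝ, ∀ P Q : H × V,
        Ω P Q = -η (b P Q) - (Θ P * η Q - Θ Q * η P)) := by
  intro b Ω Θ
  rintro ⟨η, hη⟩
  have : Nontrivial V := Module.nontrivial_of_finrank_pos (R := ℝ) (by omega)
  obtain ⟨u, hu⟩ := exists_ne (0 : V)
  obtain ⟨v, hv⟩ := hnd₀ u hu
  have hΩ : Ω (0, u) (0, v) = 0 :=
    (hη (0, u) (0, v)).trans (twistedDiff_eq_zero_of_fst_eq_zero π θ η rfl rfl)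
  exact hv (by simpa [Ω] using hΩ)

/-- The LCS structure `(ω̃, θ̃)` on `g = h ⋉_π V` (with `dim V ≥ 2`) is non-exact:
there is no 1-form `η` on `g` with `ω̃ = dη - θ̃ ∧ η`. -/
theorem semidirect_non_exact {H V : Type*} [LieRing H] [LieAlgebra ℝ H]
    [AddCommGroup V] [Module ℝ V] (hdimV : 2 ≤ Module.finrank ℝ V)
    (ω : H →ₗ[ℝ] H →ₗ[ℝ] ℝ) (θ : H →ₗ[ℝ] ℝ)
    (hskew : ∀ X Y : H, ω X Y = - ω Y X)
    (hnd : ∀ X : H, X ≠ 0 → ∃ Y : H, ω X Y ≠ 0)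
    (hclosed : ∀ X Y : H, θ ⁅X, Y⁆ = 0)
    (hdω : ∀ X Y Z : H, -ω ⁅X, Y⁆ Z + ω ⁅X, Z⁆ Y - ω ⁅Y, Z⁆ X
        = θ X * ω Y Z - θ Y * ω X Z + θ Z * ω X Y)
    (ω₀ : V →ₗ[ℝ] V →ₗ[ℝ] ℝ)
    (hskew₀ : ∀ u v : V, ω₀ u v = - ω₀ v u)
    (hnd₀ : ∀ u : V, u ≠ 0 → ∃ v : V, ω₀ u v ≠ 0)
    (π : H →ₗ[ℝ] Module.End ℝ V)
    (hπ : ∀ X Y : H, π ⁅X, Y⁆ = π X * π Y - π Y * π X)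
    (ρ : H → Module.End ℝ V)
    (hdecomp : ∀ X : H, π X = (-(θ X / 2)) • (1 : Module.End ℝ V) + ρ X)
    (hsp : ∀ (X : H) (Y Z : V), ω₀ (ρ X Y) Z + ω₀ Y (ρ X Z) = 0) :
    (let b : H × V → H × V → H × V :=
       fun P Q => (⁅P.1, Q.1⁆, π P.1 Q.2 - π Q.1 P.2)
     let Ω : H × V → H × V → ℝ := fun P Q => ω P.1 Q.1 + ω₀ P.2 Q.2
     let Θ : H × V → ℝ := fun P => θ P.1
     ¬ ∃ η : H × V →ₗ[ℝ] ℝ, ∀ P Q : H × V,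
        Ω P Q = -η (b P Q) - (Θ P * η Q - Θ Q * η P)) :=
  semidirect_non_exact_general hdimV ω θ ω₀ hnd₀ π
end

section
/- Let h be a Lie algebra with LCS structure (ω, θ), (V, ω₀) a 2n-dimensional symplectic vector space, π a LCS representation, and g = h ⋉_π V. Then g is unimodular if and only if tr(ad_X^h) = n θ(X) for every X ∈ h. -/
/-- An endomorphism infinitesimally preserving a nondegenerate bilinear form is traceless. -/
lemma trace_eq_zero_of_infinitesimally_symplectic {V : Type*} [AddCommGroup V] [Module ℝ V]
    [FiniteDimensional ℝ V] (B : V →ₗ[ℝ] V →ₗ[ℝ] ℝ)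
    (hnd : ∀ u : V, u ≠ 0 → ∃ v : V, B u v ≠ 0)
    (A : Module.End ℝ V) (h : ∀ Y Z : V, B (A Y) Z + B Y (A Z) = 0) :
    LinearMap.trace ℝ V A = 0 := by
  have hinj : Function.Injective (B : V →ₗ[ℝ] Module.Dual ℝ V) := by
    rw [← LinearMap.ker_eq_bot, Submodule.eq_bot_iff]
    intro u hu
    by_contra hne
    obtain ⟨v, hv⟩ := hnd u hne
    apply hv
    have : B u = 0 := hu
    rw [this]; rfl
  have hsurj : Function.Surjective (B : V →ₗ[ℝ] Module.Dual ℝ V) :=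
    (LinearMap.injective_iff_surjective_of_finrank_eq_finrank
      (Subspace.dual_finrank_eq).symm).1 hinj
  let e : V ≃ₗ[ℝ] Module.Dual ℝ V := LinearEquiv.ofBijective B ⟨hinj, hsurj⟩
  have key : e.conj A = - Module.Dual.transpose (R := ℝ) A := by
    ext f v
    have h1 : e.conj A f = B (A (e.symm f)) := rfl
    rw [h1]
    have h2 : (B (A (e.symm f))) v = - (B (e.symm f)) (A v) := by
      have := h (e.symm f) v; linarith
    rw [h2]
    have h3 : B (e.symm f) = f := e.apply_symm_apply f
    simp [Module.Dual.transpose, h3]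
  have t1 : LinearMap.trace ℝ V A = LinearMap.trace ℝ (Module.Dual ℝ V) (e.conj A) :=
    (LinearMap.trace_conj' A e).symm
  rw [key, show (- Module.Dual.transpose (R := ℝ) A : Module.End ℝ (Module.Dual ℝ V))
      = (-1 : ℝ) • Module.Dual.transpose (R := ℝ) A by module] at t1
  rw [map_smul, LinearMap.trace_transpose'] at t1
  simp at t1
  linarith

/-- The Lie algebra `g = h ⋉_π V` built from a LCS Lie algebra `(h, ω, θ)`, a
`2n`-dimensional symplectic vector space `(V, ω₀)` and a LCS representation `π`
is unimodular iff `tr(ad_X^h) = n θ(X)` for every `X ∈ h`. -/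
theorem semidirect_unimodular_iff {H V : Type*} [LieRing H] [LieAlgebra ℝ H]
    [FiniteDimensional ℝ H] [AddCommGroup V] [Module ℝ V] [FiniteDimensional ℝ V]
    (n : ℕ) (hdimV : Module.finrank ℝ V = 2 * n)
    (ω : H →ₗ[ℝ] H →ₗ[ℝ] ℝ) (θ : H →ₗ[ℝ] ℝ)
    (hskew : ∀ X Y : H, ω X Y = - ω Y X)
    (hnd : ∀ X : H, X ≠ 0 → ∃ Y : H, ω X Y ≠ 0)
    (hclosed : ∀ X Y : H, θ ⁅X, Y⁆ = 0)
    (hdω : ∀ X Y Z : H, -ω ⁅X, Y⁆ Z + ω ⁅X, Z⁆ Y - ω ⁅Y, Z⁆ X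
        = θ X * ω Y Z - θ Y * ω X Z + θ Z * ω X Y)
    (ω₀ : V →ₗ[ℝ] V →ₗ[ℝ] ℝ)
    (hskew₀ : ∀ u v : V, ω₀ u v = - ω₀ v u)
    (hnd₀ : ∀ u : V, u ≠ 0 → ∃ v : V, ω₀ u v ≠ 0)
    (π : H →ₗ[ℝ] Module.End ℝ V)
    (hπ : ∀ X Y : H, π ⁅X, Y⁆ = π X * π Y - π Y * π X)
    (ρ : H → Module.End ℝ V)
    (hdecomp : ∀ X : H, π X = (-(θ X / 2)) • (1 : Module.End ℝ V) + ρ X)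
    (hsp : ∀ (X : H) (Y Z : V), ω₀ (ρ X Y) Z + ω₀ Y (ρ X Z) = 0) :
    -- adjoint operators of g = h ⋉_π V
    (let adg : H × V → Module.End ℝ (H × V) := fun P =>
       LinearMap.prod
         ((LieAlgebra.ad ℝ H P.1).comp (LinearMap.fst ℝ H V))
         ((π P.1).comp (LinearMap.snd ℝ H V) - (π.flip P.2).comp (LinearMap.fst ℝ H V))
     (∀ P : H × V, LinearMap.trace ℝ (H × V) (adg P) = 0)
     ↔ (∀ X : H, LinearMap.trace ℝ H (LieAlgebra.ad ℝ H X) = n * θ X)) := by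
  intro adg
  have hρtr : ∀ X : H, LinearMap.trace ℝ V (ρ X) = 0 := fun X =>
    trace_eq_zero_of_infinitesimally_symplectic ω₀ hnd₀ (ρ X) (hsp X)
  have hπtr : ∀ X : H, LinearMap.trace ℝ V (π X) = -(n : ℝ) * θ X := by
    intro X
    rw [hdecomp X, map_add, map_smul, LinearMap.trace_one, hρtr X, hdimV]
    push_cast
    simp [smul_eq_mul]
    ring
  have htr : ∀ P : H × V, LinearMap.trace ℝ (H × V) (adg P)
      = LinearMap.trace ℝ H (LieAlgebra.ad ℝ H P.1) - n * θ P.1 := by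
    intro P
    have hdecomp' : adg P = LinearMap.prodMap (LieAlgebra.ad ℝ H P.1) (π P.1)
        - ((LinearMap.inr ℝ H V).comp ((π.flip P.2).comp (LinearMap.fst ℝ H V))) := by
      ext x <;> simp [adg, LinearMap.prodMap]
    have hzero : LinearMap.trace ℝ (H × V)
        ((LinearMap.inr ℝ H V).comp ((π.flip P.2).comp (LinearMap.fst ℝ H V))) = 0 := by
      rw [LinearMap.trace_comp_comm' ((π.flip P.2).comp (LinearMap.fst ℝ H V))
        (LinearMap.inr ℝ H V)]
      have : ((π.flip P.2).comp (LinearMap.fst ℝ H V)).comp (LinearMap.inr ℝ H V)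
          = 0 := by ext v; simp
      rw [this, map_zero]
    rw [hdecomp', map_sub, hzero, LinearMap.trace_prodMap', hπtr]
    ring
  constructor
  · intro hu X
    have := htr (X, 0)
    rw [hu (X, 0)] at this
    linarith
  · intro h P
    rw [htr P, h P.1]
    ring
end

section
/- Let (g, ω, θ) be a LCS Lie algebra and u an ideal of g contained in ker θ. Then the ω-orthogonal complement u^⊥ = {X ∈ g : ω(X,U) = 0 for all U ∈ u} is a Lie subalgebra of g. -/
/-- If `u` is an ideal of a LCS Lie algebra `(g, ω, θ)` contained in `ker θ`,
then the `ω`-orthogonal complement of `u` is a Lie subalgebra. -/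
theorem perp_subalgebra {L : Type*} [LieRing L] [LieAlgebra ℝ L]
    (ω : L →ₗ[ℝ] L →ₗ[ℝ] ℝ) (θ : L →ₗ[ℝ] ℝ)
    (hskew : ∀ X Y : L, ω X Y = - ω Y X)
    (hnd : ∀ X : L, X ≠ 0 → ∃ Y : L, ω X Y ≠ 0)
    (hclosed : ∀ X Y : L, θ ⁅X, Y⁆ = 0)
    (hdω : ∀ X Y Z : L, -ω ⁅X, Y⁆ Z + ω ⁅X, Z⁆ Y - ω ⁅Y, Z⁆ X
        = θ X * ω Y Z - θ Y * ω X Z + θ Z * ω X Y)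
    (u : LieIdeal ℝ L) (hu : ∀ U : L, U ∈ u → θ U = 0) :
    ∃ s : LieSubalgebra ℝ L,
      (s : Set L) = {X : L | ∀ U : L, U ∈ u → ω X U = 0} := by
  refine ⟨{ carrier := {X : L | ∀ U : L, U ∈ u → ω X U = 0}
            add_mem' := ?_
            zero_mem' := ?_
            smul_mem' := ?_
            lie_mem' := ?_ }, rfl⟩
  · intro a b ha hb U hU
    simp [ha U hU, hb U hU]
  · intro U hU; simp
  · intro c a ha U hU
    simp [ha U hU]
  · intro X Y hX hY U hU
    have h := hdω X Y U
    have h1 : ω ⁅X, U⁆ Y = 0 := by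
      rw [hskew]
      rw [hY _ (u.lie_mem hU)]
      ring
    have h2 : ω ⁅Y, U⁆ X = 0 := by
      rw [hskew]
      rw [hX _ (u.lie_mem hU)]
      ring
    rw [h1, h2, hX U hU, hY U hU, hu U hU] at h
    linarith
end

section
/- Let (g, ω', θ') be a LCS Lie algebra with an abelian ideal u ⊂ ker θ' on which ω' restricts non-degenerately. Then for every X ∈ u^⊥, the operator ad_X restricted to u decomposes as ad_X|_u = -(1/2)θ'(X) Id_u + ρ(X) with ρ(X) skew-symmetric with respect to ω'|_u; i.e., -ω'([X,Y],Z) + ω'([X,Z],Y) = θ'(X) ω'(Y,Z) for all X ∈ u^⊥ and Y,Z ∈ u, so ad: u^⊥ → End(u) is a LCS representation. -/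
/-- If `u` is an abelian ideal of a LCS Lie algebra `(g, ω', θ')` contained in
`ker θ'` on which `ω'` is non-degenerate, then the adjoint action of `u^⊥` on `u`
is a LCS representation: `-ω'(⁅X,Y⁆, Z) + ω'(⁅X,Z⁆, Y) = θ'(X) ω'(Y,Z)`
for all `X ∈ u^⊥` and `Y, Z ∈ u`. -/
theorem ad_is_lcs_representation {L : Type*} [LieRing L] [LieAlgebra ℝ L]
    (ω' : L →ₗ[ℝ] L →ₗ[ℝ] ℝ) (θ' : L →ₗ[ℝ] ℝ)
    (hskew : ∀ X Y : L, ω' X Y = - ω' Y X)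
    (hnd : ∀ X : L, X ≠ 0 → ∃ Y : L, ω' X Y ≠ 0)
    (hclosed : ∀ X Y : L, θ' ⁅X, Y⁆ = 0)
    (hdω : ∀ X Y Z : L, -ω' ⁅X, Y⁆ Z + ω' ⁅X, Z⁆ Y - ω' ⁅Y, Z⁆ X
        = θ' X * ω' Y Z - θ' Y * ω' X Z + θ' Z * ω' X Y)
    (u : LieIdeal ℝ L)
    (habelian : ∀ U W : L, U ∈ u → W ∈ u → ⁅U, W⁆ = 0)
    (hker : ∀ U : L, U ∈ u → θ' U = 0)
    (hndu : ∀ U : L, U ∈ u → U ≠ 0 → ∃ U' : L, U' ∈ u ∧ ω' U U' ≠ 0) :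
    ∀ X : L, (∀ U : L, U ∈ u → ω' X U = 0) →
      ∀ Y Z : L, Y ∈ u → Z ∈ u →
        -ω' ⁅X, Y⁆ Z + ω' ⁅X, Z⁆ Y = θ' X * ω' Y Z := by
  intro X hX Y Z hY hZ
  have h := hdω X Y Z
  rw [habelian Y Z hY hZ, hker Y hY, hker Z hZ, hX Y hY, hX Z hZ] at h
  simpa using h
end

section
/- Let g be the 4-dimensional Lie algebra rr_{3,-1} with basis e₁,...,e₄ and nonzero brackets [e₁,e₂] = e₂, [e₁,e₃] = -e₃. Then ω = e¹∧e² + e³∧e⁴ with θ = e¹ is a LCS structure on g (ω non-degenerate, θ closed, dω = θ ∧ ω), and it is of the second kind: θ vanishes on every infinitesimal automorphism of ω. -/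
/-!
In coordinates `X = ∑ xⁱ eᵢ` the bracket is `⁅X, Y⁆ = (x⁰y¹ - x¹y⁰) e₁ + (x²y⁰ - x⁰y²) e₂`.
It has no `e₀`-component, so `θ = e⁰` is closed, and `dω = θ ∧ ω` becomes a polynomial
identity in the coordinates. For an infinitesimal automorphism `X` of `ω`, testing on `(e₁, e₀)`
gives `ω(⁅X, e₁⁆, e₀) + ω(e₁, ⁅X, e₀⁆) = -x⁰`, hence `θ X = 0`.
-/

open Module

namespace RR3MinusOne

variable {R L : Type*} [CommRing R] [LieRing L] [LieAlgebra R L]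

/-- The bracket relations of `rr_{3,-1}`, with the basis indexed from `0` instead of `1`. -/
structure IsStandardBasis (e : Basis (Fin 4) R L) : Prop where
  lie_zero_one : ⁅e 0, e 1⁆ = e 1
  lie_zero_two : ⁅e 0, e 2⁆ = -e 2
  lie_zero_three : ⁅e 0, e 3⁆ = 0
  lie_one_two : ⁅e 1, e 2⁆ = 0
  lie_one_three : ⁅e 1, e 3⁆ = 0
  lie_two_three : ⁅e 2, e 3⁆ = 0

noncomputable def omega (e : Basis (Fin 4) R L) (X Y : L) : R :=
  e.coord 0 X * e.coord 1 Y - e.coord 1 X * e.coord 0 Y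
    + e.coord 2 X * e.coord 3 Y - e.coord 3 X * e.coord 2 Y

def IsInfinitesimalAutomorphism (ω : L → L → R) (X : L) : Prop :=
  ∀ Y Z : L, ω ⁅X, Y⁆ Z + ω Y ⁅X, Z⁆ = 0

theorem omega_nondegenerate (e : Basis (Fin 4) R L) {X : L} (hX : X ≠ 0) :
    ∃ Y : L, omega e X Y ≠ 0 := by
  obtain ⟨i, hi⟩ : ∃ i, e.repr X i ≠ 0 := by
    by_contra! h
    exact hX (e.ext_elem fun i => by simpa using h i)
  -- pair `eⁱ` with its partner in `ω`: `0 ↔ 1`, `2 ↔ 3`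
  fin_cases i
  · exact ⟨e 1, by simpa [omega, Finsupp.single_apply] using hi⟩
  · exact ⟨e 0, by simpa [omega, Finsupp.single_apply] using hi⟩
  · exact ⟨e 3, by simpa [omega, Finsupp.single_apply] using hi⟩
  · exact ⟨e 2, by simpa [omega, Finsupp.single_apply] using hi⟩

namespace IsStandardBasis

variable {e : Basis (Fin 4) R L}

theorem lie_eq (he : IsStandardBasis e) (X Y : L) :
    ⁅X, Y⁆ = (e.repr X 0 * e.repr Y 1 - e.repr X 1 * e.repr Y 0) • e 1
      + (e.repr X 2 * e.repr Y 0 - e.repr X 0 * e.repr Y 2) • e 2 := by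
  have h10 : ⁅e 1, e 0⁆ = -e 1 := by rw [← lie_skew, he.lie_zero_one]
  have h20 : ⁅e 2, e 0⁆ = e 2 := by rw [← lie_skew, he.lie_zero_two, neg_neg]
  have h30 : ⁅e 3, e 0⁆ = 0 := by rw [← lie_skew, he.lie_zero_three, neg_zero]
  have h21 : ⁅e 2, e 1⁆ = 0 := by rw [← lie_skew, he.lie_one_two, neg_zero]
  have h31 : ⁅e 3, e 1⁆ = 0 := by rw [← lie_skew, he.lie_one_three, neg_zero]
  have h32 : ⁅e 3, e 2⁆ = 0 := by rw [← lie_skew, he.lie_two_three, neg_zero]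
  conv_lhs => rw [← e.sum_repr X, ← e.sum_repr Y]
  simp only [Fin.sum_univ_four, add_lie, lie_add, smul_lie, lie_smul, lie_self,
    he.lie_zero_one, he.lie_zero_two, he.lie_zero_three, he.lie_one_two, he.lie_one_three,
    he.lie_two_three, h10, h20, h30, h21, h31, h32, smul_zero, zero_add, add_zero, smul_neg]
  module

theorem repr_lie (he : IsStandardBasis e) (X Y : L) (i : Fin 4) :
    e.repr ⁅X, Y⁆ i = ![0, e.repr X 0 * e.repr Y 1 - e.repr X 1 * e.repr Y 0,
      e.repr X 2 * e.repr Y 0 - e.repr X 0 * e.repr Y 2, 0] i := by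
  rw [he.lie_eq]
  fin_cases i <;> simp

theorem coord_zero_lie (he : IsStandardBasis e) (X Y : L) : e.coord 0 ⁅X, Y⁆ = 0 := by
  simp [he.repr_lie]

theorem d_omega_eq (he : IsStandardBasis e) (X Y Z : L) :
    -omega e ⁅X, Y⁆ Z + omega e ⁅X, Z⁆ Y - omega e ⁅Y, Z⁆ X
      = e.coord 0 X * omega e Y Z - e.coord 0 Y * omega e X Z + e.coord 0 Z * omega e X Y := by
  simp only [omega, Basis.coord_apply, he.repr_lie, Matrix.cons_val_zero, Matrix.cons_val_one,
    Matrix.cons_val]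
  ring

theorem coord_zero_eq_zero_of_isInfinitesimalAutomorphism (he : IsStandardBasis e) {X : L}
    (hX : IsInfinitesimalAutomorphism (omega e) X) : e.coord 0 X = 0 := by
  simpa [omega, he.repr_lie] using hX (e 1) (e 0)

end IsStandardBasis

end RR3MinusOne

open RR3MinusOne in
/-- On the Lie algebra `rr_{3,-1}` (basis `e₀,…,e₃`, brackets `⁅e₀,e₁⁆ = e₁`,
`⁅e₀,e₂⁆ = -e₂`), the pair `ω = e⁰∧e¹ + e²∧e³`, `θ = e⁰` is a LCS structure of
the second kind. -/
theorem rr3_minus_one_second_kind {L : Type*} [LieRing L] [LieAlgebra ℝ L]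
    (e : Module.Basis (Fin 4) ℝ L)
    (h01 : ⁅e 0, e 1⁆ = e 1) (h02 : ⁅e 0, e 2⁆ = -e 2)
    (h03 : ⁅e 0, e 3⁆ = 0) (h12 : ⁅e 1, e 2⁆ = 0)
    (h13 : ⁅e 1, e 3⁆ = 0) (h23 : ⁅e 2, e 3⁆ = 0) :
    (let c : Fin 4 → L →ₗ[ℝ] ℝ := fun i => e.coord i
     let ω : L → L → ℝ := fun X Y =>
       c 0 X * c 1 Y - c 1 X * c 0 Y + c 2 X * c 3 Y - c 3 X * c 2 Y
     let θ : L → ℝ := fun X => c 0 X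
     -- ω is non-degenerate
     (∀ X : L, X ≠ 0 → ∃ Y : L, ω X Y ≠ 0) ∧
     -- θ is closed
     (∀ X Y : L, θ ⁅X, Y⁆ = 0) ∧
     -- dω = θ ∧ ω
     (∀ X Y Z : L, -ω ⁅X, Y⁆ Z + ω ⁅X, Z⁆ Y - ω ⁅Y, Z⁆ X
        = θ X * ω Y Z - θ Y * ω X Z + θ Z * ω X Y) ∧
     -- second kind: θ vanishes on every infinitesimal automorphism of ω
     (∀ X : L, (∀ Y Z : L, ω ⁅X, Y⁆ Z + ω Y ⁅X, Z⁆ = 0) → θ X = 0)) := by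
  have he : IsStandardBasis e := ⟨h01, h02, h03, h12, h13, h23⟩
  exact ⟨fun _ => omega_nondegenerate e, he.coord_zero_lie, he.d_omega_eq,
    fun _ => he.coord_zero_eq_zero_of_isInfinitesimalAutomorphism⟩
end
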